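/- Let ρ, e, θ, π, ς, e_{D_S}, G : ℝ³ × ℝ → ℝ, v, n, q_S : ℝ³ × ℝ → ℝ³ be C¹ with ρ > 0 and θ > 0 everywhere. Suppose that at a point (x,t): the surface continuity equation D_t^S ρ + (div_Γ v) ρ = 0 holds, the internal energy equation ρ D_t^S e + (div_Γ v) π = div_Γ q_S + e_{D_S} + G holds, and the thermodynamic identity D_t^S e = θ D_t^S ς − π D_t^S (1/ρ) holds. Then at that point the entropy equation holds: D_t^N (ρ ς) + div_Γ (ρ ς v − q_S/θ) = e_{D_S}/θ + (q_S · ∇_Γ θ)/θ² + G/θ. -/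

import Mathlib

noncomputable section

open scoped BigOperators
open Matrix

/-- Points of `ℝ³`. -/
abbrev V3 : Type := Fin 3 → ℝ

/-- Points of space-time `ℝ³ × ℝ`. -/
abbrev Pt : Type := V3 × ℝ

/-- Euclidean dot product on `ℝ³`. -/
def dot (a b : V3) : ℝ := ∑ j, a j * b j

/-- Spatial partial derivative `∂_j f` (at fixed time). -/
def pd (f : Pt → ℝ) (j : Fin 3) (p : Pt) : ℝ := fderiv ℝ f p (Pi.single j 1, 0)

/-- Time derivative `∂_t f`. -/
def ptd (f : Pt → ℝ) (p : Pt) : ℝ := fderiv ℝ f p (0, 1)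

/-- Spatial gradient `∇f`. -/
def grad (f : Pt → ℝ) (p : Pt) : V3 := fun j => pd f j p

/-- Tangential derivative `∂^Γ_j f = ∂_j f − n_j (n·∇f)`. -/
def pdG (n : Pt → V3) (f : Pt → ℝ) (j : Fin 3) (p : Pt) : ℝ :=
  pd f j p - n p j * dot (n p) (grad f p)

/-- Surface gradient `∇_Γ f`. -/
def gradG (n : Pt → V3) (f : Pt → ℝ) (p : Pt) : V3 := fun j => pdG n f j p

/-- Surface divergence `div_Γ V = Σ_j ∂^Γ_j V_j` of a vector field. -/
def divG (n : Pt → V3) (V : Pt → V3) (p : Pt) : ℝ :=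
  ∑ j, pdG n (fun q => V q j) j p

/-- Row-wise surface divergence of a matrix field:
`(div_Γ M)_i = Σ_j ∂^Γ_j M_{ij}`. -/
def divGM (n : Pt → V3) (M : Pt → Matrix (Fin 3) (Fin 3) ℝ) (p : Pt) : V3 :=
  fun i => ∑ j, pdG n (fun q => M q i j) j p

/-- Material derivative `D_t^S f = ∂_t f + (v·∇)f`. -/
def DtS (v : Pt → V3) (f : Pt → ℝ) (p : Pt) : ℝ := ptd f p + dot (v p) (grad f p)

/-- Normal-time derivative `D_t^N f = ∂_t f + (v·n)(n·∇)f`. -/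
def DtN (v n : Pt → V3) (f : Pt → ℝ) (p : Pt) : ℝ :=
  ptd f p + dot (v p) (n p) * dot (n p) (grad f p)

section helpers
variable (p : Pt) (f g : Pt → ℝ)

lemma fd_mul (hf : DifferentiableAt ℝ f p) (hg : DifferentiableAt ℝ g p) (w : Pt) :
    fderiv ℝ (fun q => f q * g q) p w = f p * fderiv ℝ g p w + g p * fderiv ℝ f p w := by
  rw [fderiv_fun_mul hf hg]; simp [smul_eq_mul]

lemma fd_inv (hf : DifferentiableAt ℝ f p) (h0 : f p ≠ 0) (w : Pt) :
    fderiv ℝ (fun q => (f q)⁻¹) p w = -((f p) ^ 2)⁻¹ * fderiv ℝ f p w := by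
  have h : (fun q => (f q)⁻¹) = Inv.inv ∘ f := rfl
  rw [h, fderiv_comp p (differentiableAt_inv h0) hf]
  simp [fderiv_inv, mul_comm]

lemma pd_mul (hf : DifferentiableAt ℝ f p) (hg : DifferentiableAt ℝ g p) (j : Fin 3) :
    pd (fun q => f q * g q) j p = f p * pd g j p + g p * pd f j p := fd_mul p f g hf hg _

lemma ptd_mul (hf : DifferentiableAt ℝ f p) (hg : DifferentiableAt ℝ g p) :
    ptd (fun q => f q * g q) p = f p * ptd g p + g p * ptd f p := fd_mul p f g hf hg _

lemma pd_inv (hf : DifferentiableAt ℝ f p) (h0 : f p ≠ 0) (j : Fin 3) :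
    pd (fun q => (f q)⁻¹) j p = -((f p) ^ 2)⁻¹ * pd f j p := fd_inv p f hf h0 _

lemma ptd_inv (hf : DifferentiableAt ℝ f p) (h0 : f p ≠ 0) :
    ptd (fun q => (f q)⁻¹) p = -((f p) ^ 2)⁻¹ * ptd f p := fd_inv p f hf h0 _

lemma dot_grad_mul (hf : DifferentiableAt ℝ f p) (hg : DifferentiableAt ℝ g p) (a : V3) :
    dot a (grad (fun q => f q * g q) p)
      = f p * dot a (grad g p) + g p * dot a (grad f p) := by
  simp only [dot, grad, Finset.mul_sum, ← Finset.sum_add_distrib]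
  exact Finset.sum_congr rfl fun j _ => by rw [pd_mul p f g hf hg j]; ring

lemma dot_grad_inv (hf : DifferentiableAt ℝ f p) (h0 : f p ≠ 0) (a : V3) :
    dot a (grad (fun q => (f q)⁻¹) p) = -((f p) ^ 2)⁻¹ * dot a (grad f p) := by
  simp only [dot, grad, Finset.mul_sum]
  exact Finset.sum_congr rfl fun j _ => by rw [pd_inv p f hf h0 j]; ring

lemma DtS_mul (v : Pt → V3) (hf : DifferentiableAt ℝ f p) (hg : DifferentiableAt ℝ g p) :
    DtS v (fun q => f q * g q) p = f p * DtS v g p + g p * DtS v f p := by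
  simp only [DtS, ptd_mul p f g hf hg, dot_grad_mul p f g hf hg]; ring

lemma DtS_inv (v : Pt → V3) (hf : DifferentiableAt ℝ f p) (h0 : f p ≠ 0) :
    DtS v (fun q => (f q)⁻¹) p = -((f p) ^ 2)⁻¹ * DtS v f p := by
  simp only [DtS, ptd_inv p f hf h0, dot_grad_inv p f hf h0]; ring

lemma pdG_mul (n : Pt → V3) (hf : DifferentiableAt ℝ f p) (hg : DifferentiableAt ℝ g p)
    (j : Fin 3) :
    pdG n (fun q => f q * g q) j p = f p * pdG n g j p + g p * pdG n f j p := by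
  simp only [pdG, pd_mul p f g hf hg, dot_grad_mul p f g hf hg]; ring

lemma pdG_inv (n : Pt → V3) (hf : DifferentiableAt ℝ f p) (h0 : f p ≠ 0) (j : Fin 3) :
    pdG n (fun q => (f q)⁻¹) j p = -((f p) ^ 2)⁻¹ * pdG n f j p := by
  simp only [pdG, pd_inv p f hf h0, dot_grad_inv p f hf h0]; ring

lemma pdG_sub (n : Pt → V3) (hf : DifferentiableAt ℝ f p) (hg : DifferentiableAt ℝ g p)
    (j : Fin 3) :
    pdG n (fun q => f q - g q) j p = pdG n f j p - pdG n g j p := by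
  have h : ∀ w : Pt, fderiv ℝ (fun q => f q - g q) p w = fderiv ℝ f p w - fderiv ℝ g p w := by
    intro w; rw [fderiv_fun_sub hf hg]; simp
  have hgr : ∀ a : V3, dot a (grad (fun q => f q - g q) p)
      = dot a (grad f p) - dot a (grad g p) := by
    intro a
    simp only [dot, grad, pd, h, ← Finset.sum_sub_distrib]
    exact Finset.sum_congr rfl fun j _ => by ring
  simp only [pdG, pd, h, hgr]; ring

lemma dot_gradG (n : Pt → V3) (a : V3) :
    dot a (gradG n f p) = dot a (grad f p) - dot a (n p) * dot (n p) (grad f p) := by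
  simp only [dot, gradG, pdG, mul_sub, Finset.sum_sub_distrib, Finset.sum_mul]
  congr 1
  exact Finset.sum_congr rfl fun j _ => by rw [mul_assoc]

end helpers


/-- entropy equation on the evolving surface. If at `p` the
surface continuity equation, the internal energy equation
`ρ D_t^S e + (div_Γ v) π = div_Γ q_S + e_{D_S} + G`, and the thermodynamic
identity `D_t^S e = θ D_t^S ς − π D_t^S (1/ρ)` hold (with `ρ, θ > 0`), then
`D_t^N (ρ ς) + div_Γ (ρ ς v − q_S/θ) = e_{D_S}/θ + (q_S·∇_Γ θ)/θ² + G/θ`. -/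
theorem surface_entropy_equation
    (ρ e θ pres ς eDS G : Pt → ℝ) (v n qS : Pt → V3)
    (hρ : ContDiff ℝ 1 ρ) (he : ContDiff ℝ 1 e) (hθ : ContDiff ℝ 1 θ)
    (hpres : ContDiff ℝ 1 pres) (hς : ContDiff ℝ 1 ς)
    (heDS : ContDiff ℝ 1 eDS) (hG : ContDiff ℝ 1 G)
    (hv : ContDiff ℝ 1 v) (hn : ContDiff ℝ 1 n) (hqS : ContDiff ℝ 1 qS)
    (hρpos : ∀ q, 0 < ρ q) (hθpos : ∀ q, 0 < θ q)
    (p : Pt)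
    (hcont : DtS v ρ p + divG n v p * ρ p = 0)
    (henergy : ρ p * DtS v e p + divG n v p * pres p
      = divG n qS p + eDS p + G p)
    (hthermo : DtS v e p = θ p * DtS v ς p - pres p * DtS v (fun q => (ρ q)⁻¹) p) :
    DtN v n (fun q => ρ q * ς q) p
      + divG n (fun q => (ρ q * ς q) • v q - (θ q)⁻¹ • qS q) p
      = eDS p / θ p + dot (qS p) (gradG n θ p) / (θ p) ^ 2 + G p / θ p := by
  have hρd : DifferentiableAt ℝ ρ p := (hρ.differentiable one_ne_zero) p
  have hςd : DifferentiableAt ℝ ς p := (hς.differentiable one_ne_zero) p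
  have hθd : DifferentiableAt ℝ θ p := (hθ.differentiable one_ne_zero) p
  have hvd : ∀ j, DifferentiableAt ℝ (fun q => v q j) p :=
    differentiableAt_pi.mp ((hv.differentiable one_ne_zero) p)
  have hqd : ∀ j, DifferentiableAt ℝ (fun q => qS q j) p :=
    differentiableAt_pi.mp ((hqS.differentiable one_ne_zero) p)
  have hθ0 : θ p ≠ 0 := (hθpos p).ne'
  have hρ0 : ρ p ≠ 0 := (hρpos p).ne'
  have hA : DifferentiableAt ℝ (fun q => ρ q * ς q) p := hρd.mul hςd
  have hB : DifferentiableAt ℝ (fun q => (θ q)⁻¹) p := hθd.inv hθ0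
  have hWj : ∀ j, pdG n (fun q => ((ρ q * ς q) • v q - (θ q)⁻¹ • qS q) j) j p
      = (ρ p * ς p) * pdG n (fun q => v q j) j p
        + v p j * pdG n (fun q => ρ q * ς q) j p
        - (θ p)⁻¹ * pdG n (fun q => qS q j) j p
        + ((θ p) ^ 2)⁻¹ * (qS p j * pdG n θ j p) := by
    intro j
    have hfun : (fun q => ((ρ q * ς q) • v q - (θ q)⁻¹ • qS q) j)
        = fun q => (ρ q * ς q) * v q j - (θ q)⁻¹ * qS q j := rfl
    rw [hfun, pdG_sub p (fun q => ρ q * ς q * v q j) (fun q => (θ q)⁻¹ * qS q j) n (hA.mul (hvd j)) (hB.mul (hqd j)) j,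
      pdG_mul p _ _ n hA (hvd j) j, pdG_mul p _ _ n hB (hqd j) j,
      pdG_inv p θ n hθd hθ0 j]
    ring
  have hdivW : divG n (fun q => (ρ q * ς q) • v q - (θ q)⁻¹ • qS q) p
      = (ρ p * ς p) * divG n v p + dot (v p) (gradG n (fun q => ρ q * ς q) p)
        - (θ p)⁻¹ * divG n qS p + ((θ p) ^ 2)⁻¹ * dot (qS p) (gradG n θ p) := by
    simp only [divG]
    rw [Finset.sum_congr rfl fun j _ => hWj j]
    simp only [Finset.sum_add_distrib, Finset.sum_sub_distrib, ← Finset.mul_sum]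
    rfl
  have key : DtN v n (fun q => ρ q * ς q) p
      + divG n (fun q => (ρ q * ς q) • v q - (θ q)⁻¹ • qS q) p
      = DtS v (fun q => ρ q * ς q) p + (ρ p * ς p) * divG n v p
        - (θ p)⁻¹ * divG n qS p + ((θ p) ^ 2)⁻¹ * dot (qS p) (gradG n θ p) := by
    rw [hdivW, dot_gradG p (fun q => ρ q * ς q) n (v p)]
    simp only [DtN, DtS]; ring
  rw [key, DtS_mul p ρ ς v hρd hςd]
  rw [DtS_inv p ρ v hρd hρ0] at hthermo
  have ha : DtS v ρ p = -(divG n v p * ρ p) := by linarith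
  rw [ha] at hthermo
  have hb : ρ p * (θ p * DtS v ς p) = divG n qS p + eDS p + G p := by
    have h1 : ρ p * DtS v e p = ρ p * (θ p * DtS v ς p) - pres p * divG n v p := by
      rw [hthermo]; field_simp
    nlinarith [henergy, h1]
  rw [ha]
  field_simp
  linear_combination (θ p) * hb
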